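/- arXiv:math/0309285 — 2 statements merged into one kernel-verified Lean document; each statement's English description precedes it below -/
import Mathlib

section
/- Principle of Optimality: Let P be an optimal partition of the cells {1,…,N} (i.e., V(P) ≥ V(Q) for every interval-block partition Q of {1,…,N}), and let P₁ be any subset of the blocks of P, covering the set S = ⋃_{[j,k] ∈ P₁} [j,k]. Then P₁ is an optimal partition of S: for every set P₃ of pairwise disjoint integer intervals [j,k] with j ≤ k whose union is S, one has V(P₁) ≥ V(P₃). -/
/-- A partition of a finite set `S ⊆ ℕ` into blocks: a finite collection of
integer intervals `[j,k]` (represented as pairs `(j,k)` with `1 ≤ j ≤ k`) that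
are pairwise disjoint and whose union is `S`. -/
def IsPartition (P : Finset (ℕ × ℕ)) (S : Finset ℕ) : Prop :=
  (∀ b ∈ P, 1 ≤ b.1 ∧ b.1 ≤ b.2) ∧
  (∀ b ∈ P, ∀ b' ∈ P, b ≠ b' →
      Disjoint (Finset.Icc b.1 b.2) (Finset.Icc b'.1 b'.2)) ∧
  P.biUnion (fun b => Finset.Icc b.1 b.2) = S

/-- The fitness of a partition: the sum of the block fitnesses. -/
noncomputable def V (g : ℕ → ℕ → ℝ) (P : Finset (ℕ × ℕ)) : ℝ :=
  ∑ b ∈ P, g b.1 b.2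

lemma biUnion_union_aux {α β : Type*} [DecidableEq α] [DecidableEq β]
    (s t : Finset α) (f : α → Finset β) :
    (s ∪ t).biUnion f = s.biUnion f ∪ t.biUnion f := by
  ext x
  simp only [Finset.mem_biUnion, Finset.mem_union]
  constructor
  · rintro ⟨a, ha | ha, hx⟩
    · exact Or.inl ⟨a, ha, hx⟩
    · exact Or.inr ⟨a, ha, hx⟩
  · rintro (⟨a, ha, hx⟩ | ⟨a, ha, hx⟩)
    · exact ⟨a, Or.inl ha, hx⟩
    · exact ⟨a, Or.inr ha, hx⟩

/-- Principle of Optimality: any subset `P₁` of the blocks of an optimal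
partition `P` of `{1,…,N}` is an optimal partition of the set `S` it covers. -/
theorem principle_of_optimality (N : ℕ) (g : ℕ → ℕ → ℝ)
    (P : Finset (ℕ × ℕ)) (hP : IsPartition P (Finset.Icc 1 N))
    (hPopt : ∀ Q : Finset (ℕ × ℕ), IsPartition Q (Finset.Icc 1 N) → V g Q ≤ V g P)
    (P₁ : Finset (ℕ × ℕ)) (hP₁ : P₁ ⊆ P)
    (S : Finset ℕ) (hS : S = P₁.biUnion (fun b => Finset.Icc b.1 b.2)) :
    ∀ P₃ : Finset (ℕ × ℕ), IsPartition P₃ S → V g P₃ ≤ V g P₁ := by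
  intro P₃ hP₃
  obtain ⟨hPval, hPdisj, hPun⟩ := hP
  obtain ⟨h3val, h3disj, h3un⟩ := hP₃
  -- intervals of blocks in P \ P₁ are disjoint from S
  have hdiffS : ∀ b ∈ P \ P₁, Disjoint (Finset.Icc b.1 b.2) S := by
    intro b hb
    rw [hS]
    refine (Finset.disjoint_biUnion_right _ _ _).mpr ?_
    intro b' hb'
    exact hPdisj b (Finset.mem_sdiff.mp hb).1 b' (hP₁ hb')
      (fun h => (Finset.mem_sdiff.mp hb).2 (h ▸ hb'))
  -- intervals of blocks of P₃ are contained in S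
  have h3S : ∀ b ∈ P₃, Finset.Icc b.1 b.2 ⊆ S := by
    intro b hb
    rw [← h3un]
    exact Finset.subset_biUnion_of_mem (fun b => Finset.Icc b.1 b.2) hb
  -- P \ P₁ and P₃ are disjoint finsets
  have hdisjF : Disjoint (P \ P₁) P₃ := by
    rw [Finset.disjoint_left]
    intro b hb hb3
    have hne : (Finset.Icc b.1 b.2).Nonempty :=
      Finset.nonempty_Icc.mpr (h3val b hb3).2
    have : Disjoint (Finset.Icc b.1 b.2) (Finset.Icc b.1 b.2) :=
      (hdiffS b hb).mono_right (h3S b hb3)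
    exact hne.ne_empty (Finset.bot_eq_empty ▸ disjoint_self.mp this)
  -- the exchanged partition
  set Q := (P \ P₁) ∪ P₃ with hQ
  have hQpart : IsPartition Q (Finset.Icc 1 N) := by
    refine ⟨?_, ?_, ?_⟩
    · intro b hb
      rcases Finset.mem_union.mp hb with h | h
      · exact hPval b (Finset.mem_sdiff.mp h).1
      · exact h3val b h
    · intro b hb b' hb' hne
      rcases Finset.mem_union.mp hb with h | h <;>
        rcases Finset.mem_union.mp hb' with h' | h'
      · exact hPdisj b (Finset.mem_sdiff.mp h).1 b' (Finset.mem_sdiff.mp h').1 hne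
      · exact (hdiffS b h).mono_right (h3S b' h')
      · exact ((hdiffS b' h').mono_right (h3S b h)).symm
      · exact h3disj b h b' h' hne
    · have h1 : Q.biUnion (fun b => Finset.Icc b.1 b.2)
          = (P \ P₁).biUnion (fun b => Finset.Icc b.1 b.2)
            ∪ P₃.biUnion (fun b => Finset.Icc b.1 b.2) := biUnion_union_aux _ _ _
      have h2 : P = (P \ P₁) ∪ P₁ := (Finset.sdiff_union_of_subset hP₁).symm
      have h3 : P.biUnion (fun b => Finset.Icc b.1 b.2)
          = (P \ P₁).biUnion (fun b => Finset.Icc b.1 b.2)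
            ∪ P₁.biUnion (fun b => Finset.Icc b.1 b.2) := by
        conv_lhs => rw [h2]
        exact biUnion_union_aux _ _ _
      rw [h1, h3un, hS, ← h3, hPun]
  have hVQ : V g Q = V g (P \ P₁) + V g P₃ := Finset.sum_union hdisjF
  have hVP : V g (P \ P₁) + V g P₁ = V g P := Finset.sum_sdiff hP₁
  have := hPopt Q hQpart
  rw [hVQ] at this
  linarith
end

section
/- Correctness of the dynamic programming algorithm (Theorem 2, correctness part): Define A : ℕ → ℝ recursively by A(0) = 0 and A(n+1) = max_{1 ≤ j ≤ n+1} ( A(j−1) + g(j, n+1) ). Then for every N ≥ 1, A(N) equals the maximum of V(P) over all partitions P of {1,…,N} into blocks; in particular the algorithm finds the exact global optimum of the additive fitness function. -/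
/-- The dynamic programming recursion: `A 0 = 0` and
`A (n+1) = max_{1 ≤ j ≤ n+1} (A (j−1) + g j (n+1))`. -/
noncomputable def A (g : ℕ → ℕ → ℝ) : ℕ → ℝ
  | 0 => 0
  | n + 1 =>
      (Finset.Icc 1 (n + 1)).attach.sup'
        (Finset.attach_nonempty_iff.mpr (Finset.nonempty_Icc.mpr (by omega)))
        (fun j => A g (j.1 - 1) + g j.1 (n + 1))
  decreasing_by
    have := Finset.mem_Icc.mp j.2
    omega

lemma ach (g : ℕ → ℕ → ℝ) : ∀ N, ∃ P, IsPartition P (Finset.Icc 1 N) ∧ V g P = A g N := by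
  intro N
  induction N using Nat.strong_induction_on with
  | _ N ih =>
    match N with
    | 0 => exact ⟨∅, ⟨by simp, by simp, by simp⟩, by simp [V, A]⟩
    | n + 1 =>
      have hA : A g (n+1) = (Finset.Icc 1 (n + 1)).attach.sup'
          (Finset.attach_nonempty_iff.mpr (Finset.nonempty_Icc.mpr (by omega)))
          (fun j => A g (j.1 - 1) + g j.1 (n + 1)) := by rw [A]
      obtain ⟨j, hjmem, hje⟩ := Finset.exists_mem_eq_sup'
        (Finset.attach_nonempty_iff.mpr (Finset.nonempty_Icc.mpr (by omega)))
        (fun j : {x // x ∈ Finset.Icc 1 (n+1)} => A g (j.1 - 1) + g j.1 (n + 1))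
      have hj1 : 1 ≤ j.1 := (Finset.mem_Icc.mp j.2).1
      have hj2 : j.1 ≤ n + 1 := (Finset.mem_Icc.mp j.2).2
      obtain ⟨P', ⟨hP1, hP2, hP3⟩, hV⟩ := ih (j.1 - 1) (by omega)
      have hsub : ∀ b ∈ P', Finset.Icc b.1 b.2 ⊆ Finset.Icc 1 (j.1 - 1) := by
        intro b hb
        rw [← hP3]
        exact Finset.subset_biUnion_of_mem (fun b : ℕ × ℕ => Finset.Icc b.1 b.2) hb
      have hnotmem : (j.1, n+1) ∉ P' := by
        intro h
        have := hsub _ h (Finset.mem_Icc.mpr ⟨by omega, le_refl _⟩ : (n+1) ∈ Finset.Icc j.1 (n+1))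
        have := Finset.mem_Icc.mp this
        omega
      refine ⟨insert (j.1, n+1) P', ⟨?_, ?_, ?_⟩, ?_⟩
      · intro b hb
        rcases Finset.mem_insert.mp hb with h | h
        · subst h; exact ⟨hj1, by omega⟩
        · exact hP1 b h
      · have hdisj : ∀ b ∈ P', Disjoint (Finset.Icc (j.1) (n+1)) (Finset.Icc b.1 b.2) := by
          intro b hb
          refine Finset.disjoint_left.mpr fun x hx hx' => ?_
          have h1 := Finset.mem_Icc.mp hx
          have h2 := Finset.mem_Icc.mp (hsub b hb hx')
          omega
        intro b hb b' hb' hne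
        rcases Finset.mem_insert.mp hb with h | h <;> rcases Finset.mem_insert.mp hb' with h' | h'
        · subst h; subst h'; exact absurd rfl hne
        · subst h; exact hdisj b' h'
        · subst h'; exact (hdisj b h).symm
        · exact hP2 b h b' h' hne
      · rw [Finset.biUnion_insert, hP3]
        ext x
        simp only [Finset.mem_union, Finset.mem_Icc]
        omega
      · rw [V, Finset.sum_insert hnotmem, hA, hje]
        have : V g P' = ∑ b ∈ P', g b.1 b.2 := rfl
        rw [← this, hV]
        ring

lemma ub (g : ℕ → ℕ → ℝ) : ∀ N, ∀ P, IsPartition P (Finset.Icc 1 N) → V g P ≤ A g N := by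
  intro N
  induction N using Nat.strong_induction_on with
  | _ N ih =>
    match N with
    | 0 =>
      rintro P ⟨hP1, hP2, hP3⟩
      have : P = ∅ := by
        by_contra h
        obtain ⟨b, hb⟩ := Finset.nonempty_iff_ne_empty.mpr h
        have h1 := hP1 b hb
        have : b.1 ∈ Finset.Icc 1 0 := by
          rw [← hP3]
          exact Finset.mem_biUnion.mpr ⟨b, hb, Finset.mem_Icc.mpr ⟨le_refl _, h1.2⟩⟩
        simp at this
      subst this
      simp [V, A]
    | n + 1 =>
      rintro P ⟨hP1, hP2, hP3⟩
      have hmem : (n+1) ∈ P.biUnion (fun b => Finset.Icc b.1 b.2) := by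
        rw [hP3]; exact Finset.mem_Icc.mpr ⟨by omega, le_refl _⟩
      obtain ⟨b, hb, hnb⟩ := Finset.mem_biUnion.mp hmem
      have hnb' := Finset.mem_Icc.mp hnb
      have hb1 := hP1 b hb
      have hsub : ∀ c ∈ P, Finset.Icc c.1 c.2 ⊆ Finset.Icc 1 (n+1) := by
        intro c hc
        rw [← hP3]
        exact Finset.subset_biUnion_of_mem (fun b : ℕ × ℕ => Finset.Icc b.1 b.2) hc
      have hb2 : b.2 = n + 1 := by
        have := Finset.mem_Icc.mp (hsub b hb (Finset.mem_Icc.mpr ⟨hb1.2, le_refl _⟩))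
        omega
      set j := b.1 with hjdef
      have hjub : j ≤ n + 1 := by omega
      -- P.erase b partitions Icc 1 (j-1)
      have herase : IsPartition (P.erase b) (Finset.Icc 1 (j-1)) := by
        refine ⟨fun c hc => hP1 c (Finset.mem_of_mem_erase hc),
          fun c hc c' hc' hne => hP2 c (Finset.mem_of_mem_erase hc) c' (Finset.mem_of_mem_erase hc') hne, ?_⟩
        ext x
        simp only [Finset.mem_biUnion, Finset.mem_Icc]
        constructor
        · rintro ⟨c, hc, hxc⟩
          have hcP := Finset.mem_of_mem_erase hc
          have hcne := Finset.ne_of_mem_erase hc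
          have hx1 := Finset.mem_Icc.mp (hsub c hcP (Finset.mem_Icc.mpr hxc))
          have hdisj := hP2 c hcP b hb hcne
          have hxnotb : x ∉ Finset.Icc b.1 b.2 :=
            Finset.disjoint_left.mp hdisj (Finset.mem_Icc.mpr hxc)
          rw [Finset.mem_Icc] at hxnotb
          omega
        · intro hx
          have hxN : x ∈ Finset.Icc 1 (n+1) := Finset.mem_Icc.mpr ⟨hx.1, by omega⟩
          rw [← hP3] at hxN
          obtain ⟨c, hc, hxc⟩ := Finset.mem_biUnion.mp hxN
          have hcne : c ≠ b := by
            intro h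
            subst h
            have := Finset.mem_Icc.mp hxc
            omega
          exact ⟨c, Finset.mem_erase.mpr ⟨hcne, hc⟩, Finset.mem_Icc.mp hxc⟩
      have hVsplit : V g P = g j (n+1) + V g (P.erase b) := by
        rw [V, V, ← Finset.sum_erase_add _ _ hb, hb2]
        ring
      have hle : V g (P.erase b) ≤ A g (j - 1) := ih (j-1) (by omega) _ herase
      have hjm : j ∈ Finset.Icc 1 (n+1) := Finset.mem_Icc.mpr ⟨hb1.1, hjub⟩
      have hsup : A g (j-1) + g j (n+1) ≤ A g (n+1) := by
        rw [A]
        exact Finset.le_sup' (f := fun k : {x // x ∈ Finset.Icc 1 (n+1)} => A g (k.1 - 1) + g k.1 (n+1))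
          (Finset.mem_attach _ ⟨j, hjm⟩)
      calc V g P = A g (j-1) + g j (n+1) + (V g (P.erase b) - A g (j-1)) := by rw [hVsplit]; ring
        _ ≤ A g (j-1) + g j (n+1) + 0 := by linarith
        _ ≤ A g (n+1) := by simpa using hsup

/-- Correctness of the dynamic programming algorithm: for every `N ≥ 1`,
`A g N` equals the maximum of the fitness `V` over all partitions of
`{1,…,N}` into blocks, i.e. the algorithm finds the exact global optimum. -/
theorem dynamic_programming_correct (g : ℕ → ℕ → ℝ) (N : ℕ) (hN : 1 ≤ N) :
    IsGreatest {v : ℝ | ∃ P : Finset (ℕ × ℕ),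
      IsPartition P (Finset.Icc 1 N) ∧ V g P = v} (A g N) := by
  constructor
  · exact ach g N
  · rintro v ⟨P, hP, rfl⟩
    exact ub g N P hP
end
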